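/- arXiv:2604.22957 — 2 statements merged into one kernel-verified Lean document; each statement's English description precedes it below -/
import Mathlib

section
/- Let (ξ̄*, η̄*, σ̄*) ∈ (ℝ×ℝ²)³ be such that η̄* + σ̄* = 0, η₀* ≠ 0 and 3(η₀*)² ≠ |η*|². Then there is an open neighborhood U of (ξ̄*, η̄*, σ̄*) in (ℝ×ℝ²)³ such that for every (ξ̄, η̄, σ̄) ∈ U one has ∇_η̄ φ₃(ξ̄,η̄,σ̄) = ∇_σ̄ φ₃(ξ̄,η̄,σ̄) if and only if η̄ + σ̄ = 0; i.e., near such points the zero set of ∇_η̄ φ₃ − ∇_σ̄ φ₃ coincides with the antidiagonal {η̄ + σ̄ = 0}. -/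
noncomputable section

/-- The frequency space `ℝ × ℝ²`, represented as Euclidean `ℝ³`:
coordinate `0` is `v₀` and coordinates `1, 2` form the spatial part `v`. -/
abbrev E3 : Type := EuclideanSpace ℝ (Fin 3)

/-- The dispersion relation `ω(v̄) = v₀(v₀² + |v|²)`. -/
def omega (v : E3) : ℝ := v 0 * ((v 0) ^ 2 + (v 1) ^ 2 + (v 2) ^ 2)

/-- The cubic phase `φ₃(ξ̄,η̄,σ̄) = ω(ξ̄) − ω(η̄) − ω(σ̄) − ω(ρ̄)` with `ρ̄ = ξ̄ − η̄ − σ̄`. -/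
def phi3 (ξ η σ : E3) : ℝ := omega ξ - omega η - omega σ - omega (ξ - η - σ)

/-!
In `∇_η̄ φ₃ − ∇_σ̄ φ₃` the contributions of `ρ̄` cancel, leaving `∇ω(σ̄) − ∇ω(η̄)`. Since `∇ω` is
even, this vanishes on the antidiagonal. Conversely, `∇ω(η̄) = ∇ω(σ̄)` forces
`(η₀² − σ₀²)(3η₀² − |σ|²) = 0`. Near the base point `η₀σ₀ < 0` and the second factor is nonzero,
so `η₀ = −σ₀ ≠ 0`, and `η₀η_i = σ₀σ_i` then gives `η_i = −σ_i`.
-/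

open InnerProductSpace

section CubicPhase

variable {F : Type*} [NormedAddCommGroup F] [InnerProductSpace ℝ F] [CompleteSpace F]

theorem HasGradientAt.const_sub_sub_comp_sub {f : F → ℝ} {g : F → F}
    (hf : ∀ v, HasGradientAt f (g v) v) (c : ℝ) (a x : F) :
    HasGradientAt (fun y => c - f y - f (a - y)) (g (a - x) - g x) x := by
  simp only [hasGradientAt_iff_hasFDerivAt] at hf ⊢
  have hsub : HasFDerivAt (fun y : F => a - y) (0 - ContinuousLinearMap.id ℝ F) x :=
    (hasFDerivAt_const a x).sub (hasFDerivAt_id x)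
  refine (((hasFDerivAt_const c x).sub (hf x)).sub ((hf (a - x)).comp x hsub)).congr_fderiv ?_
  ext y
  simp only [zero_sub, ContinuousLinearMap.comp_neg, ContinuousLinearMap.comp_id, sub_neg_eq_add,
    add_apply, neg_apply, toDual_apply_apply, map_sub, sub_apply]
  ring

end CubicPhase

def gradOmega (v : E3) : E3 :=
  !₂[3 * v 0 ^ 2 + v 1 ^ 2 + v 2 ^ 2, 2 * v 0 * v 1, 2 * v 0 * v 2]

theorem hasGradientAt_omega (v : E3) : HasGradientAt omega (gradOmega v) v := by
  have hproj (i : Fin 3) :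
      HasFDerivAt (fun w : E3 => w i) (EuclideanSpace.proj i : E3 →L[ℝ] ℝ) v := by
    simpa using (EuclideanSpace.proj i : E3 →L[ℝ] ℝ).hasFDerivAt
  have h := (hproj 0).mul ((((hproj 0).pow 2).add ((hproj 1).pow 2)).add ((hproj 2).pow 2))
  rw [hasGradientAt_iff_hasFDerivAt]
  refine h.congr_fderiv ?_
  ext w
  simp only [gradOmega, toDual_apply_apply, PiLp.inner_apply, RCLike.inner_apply,
    Real.ringHom_apply, Fin.sum_univ_three, Matrix.cons_val_zero, Matrix.cons_val_one,
    Matrix.cons_val, add_apply, smul_apply, PiLp.proj_apply, smul_eq_mul, Nat.cast_ofNat,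
    Nat.add_one_sub_one, pow_one, nsmul_eq_mul, Pi.add_apply]
  ring

theorem gradOmega_neg (v : E3) : gradOmega (-v) = gradOmega v := by
  ext i
  fin_cases i <;> simp [gradOmega]

theorem phi3_comm (ξ η σ : E3) : phi3 ξ η σ = phi3 ξ σ η := by
  unfold phi3
  rw [sub_right_comm ξ η σ]
  ring

theorem hasGradientAt_phi3_right (ξ η σ : E3) :
    HasGradientAt (fun σ' => phi3 ξ η σ') (gradOmega (ξ - η - σ) - gradOmega σ) σ :=
  HasGradientAt.const_sub_sub_comp_sub hasGradientAt_omega _ _ σ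

theorem gradient_phi3_eq_iff (ξ η σ : E3) :
    gradient (fun η' => phi3 ξ η' σ) η = gradient (fun σ' => phi3 ξ η σ') σ ↔
      gradOmega η = gradOmega σ := by
  simp only [phi3_comm ξ _ σ]
  rw [(hasGradientAt_phi3_right ξ σ η).gradient, (hasGradientAt_phi3_right ξ η σ).gradient,
    sub_right_comm ξ σ η, sub_right_inj, eq_comm]

theorem eq_neg_of_gradOmega_eq {η σ : E3} (h : gradOmega η = gradOmega σ)
    (hopp : η 0 * σ 0 < 0) (hne : 3 * η 0 ^ 2 ≠ σ 1 ^ 2 + σ 2 ^ 2) : η = -σ := by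
  have e0 := congrArg (· 0) h
  have e1 := congrArg (· 1) h
  have e2 := congrArg (· 2) h
  simp only [gradOmega, Matrix.cons_val_zero, Matrix.cons_val_one, Matrix.cons_val] at e0 e1 e2
  have key : (η 0 ^ 2 - σ 0 ^ 2) * (3 * η 0 ^ 2 - (σ 1 ^ 2 + σ 2 ^ 2)) = 0 := by
    linear_combination η 0 ^ 2 * e0 - (η 0 * η 1 + σ 0 * σ 1) / 2 * e1
      - (η 0 * η 2 + σ 0 * σ 2) / 2 * e2
  have hsq : η 0 ^ 2 = σ 0 ^ 2 := by
    rcases mul_eq_zero.1 key with h | h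
    · linarith
    · exact absurd (by linarith) hne
  have h0 : η 0 = -σ 0 := by
    rcases sq_eq_sq_iff_eq_or_eq_neg.1 hsq with h | h
    · nlinarith [mul_self_nonneg (σ 0)]
    · exact h
  have hη0 : η 0 ≠ 0 := left_ne_zero_of_mul hopp.ne
  have h1 : η 1 = -σ 1 := mul_left_cancel₀ hη0 (by linear_combination e1 / 2 + σ 1 * h0)
  have h2 : η 2 = -σ 2 := mul_left_cancel₀ hη0 (by linear_combination e2 / 2 + σ 2 * h0)
  ext i
  fin_cases i
  exacts [h0, h1, h2]

/-- near a point `(ξ̄*,η̄*,σ̄*)` with `η̄* + σ̄* = 0`, `η₀* ≠ 0` and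
`3(η₀*)² ≠ |η*|²`, the zero set of `∇_η̄ φ₃ − ∇_σ̄ φ₃` coincides with the
antidiagonal `{η̄ + σ̄ = 0}`. -/
theorem stmt_2 (ξs ηs σs : E3)
    (h0 : ηs + σs = 0) (h1 : ηs 0 ≠ 0)
    (h2 : 3 * (ηs 0) ^ 2 ≠ (ηs 1) ^ 2 + (ηs 2) ^ 2) :
    ∃ U : Set (E3 × E3 × E3), IsOpen U ∧ (ξs, ηs, σs) ∈ U ∧
      ∀ p ∈ U,
        (gradient (fun η' => phi3 p.1 η' p.2.2) p.2.1 =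
            gradient (fun σ' => phi3 p.1 p.2.1 σ') p.2.2 ↔
          p.2.1 + p.2.2 = 0) := by
  refine ⟨{p | p.2.1 0 * p.2.2 0 < 0 ∧ 3 * p.2.1 0 ^ 2 ≠ p.2.2 1 ^ 2 + p.2.2 2 ^ 2},
    ?_, ?_, fun p hp => ?_⟩
  · rw [Set.ofPred_and]
    exact (isOpen_lt (by fun_prop) (by fun_prop)).inter
      (isOpen_ne_fun (by fun_prop) (by fun_prop))
  · rw [eq_neg_of_add_eq_zero_right h0]
    exact ⟨by simpa using h1, by simpa using h2⟩
  · rw [gradient_phi3_eq_iff, add_eq_zero_iff_eq_neg]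
    refine ⟨fun h => eq_neg_of_gradOmega_eq h hp.1 hp.2, fun h => ?_⟩
    rw [h, gradOmega_neg]
end
end

section
/- (Nonresonance of opposite cone–cone interactions with repeated output.) Let η̄ = (η₀,η) and σ̄ = (σ₀,σ) in ℝ×ℝ² satisfy the cone conditions |η|² = 3η₀² and |σ|² = 3σ₀², together with η·σ = −3η₀σ₀. Then, with ξ̄ = η̄ + 2σ̄ (so that ρ̄ = ξ̄ − η̄ − σ̄ = σ̄), the cubic phase evaluates exactly to φ₃(ξ̄, η̄, σ̄) = 24σ₀³. In particular φ₃ does not vanish at such configurations when σ₀ ≠ 0. -/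
noncomputable section

/-- nonresonance of opposite cone–cone interactions with repeated
output: if `|η|² = 3η₀²`, `|σ|² = 3σ₀²` and `η·σ = −3η₀σ₀`, then with `ξ̄ = η̄ + 2σ̄`
(so `ρ̄ = σ̄`) the cubic phase equals `φ₃(ξ̄,η̄,σ̄) = 24σ₀³`; in particular it does not
vanish when `σ₀ ≠ 0`. -/
theorem stmt_14 (η σ : E3)
    (hη : (η 1) ^ 2 + (η 2) ^ 2 = 3 * (η 0) ^ 2)
    (hσ : (σ 1) ^ 2 + (σ 2) ^ 2 = 3 * (σ 0) ^ 2)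
    (hdot : η 1 * σ 1 + η 2 * σ 2 = -(3 * η 0 * σ 0)) :
    phi3 (η + (2 : ℝ) • σ) η σ = 24 * (σ 0) ^ 3 ∧
    (σ 0 ≠ 0 → phi3 (η + (2 : ℝ) • σ) η σ ≠ 0) := by
  have h : phi3 (η + (2 : ℝ) • σ) η σ = 24 * (σ 0) ^ 3 := by
    simp only [phi3, omega, PiLp.add_apply, PiLp.smul_apply, PiLp.sub_apply, smul_eq_mul]
    linear_combination (2 * σ 0) * hη + (4 * η 0 + 6 * σ 0) * hσ + (4 * (η 0 + 2 * σ 0)) * hdot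
  refine ⟨h, fun h0 => ?_⟩
  rw [h]
  positivity
end
end
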